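/- Let m > 1. There exists an antipodal (1,m)-fold cover of the circle S^1 consisting of m + 2 open sets. (Upper bound of Proposition 5: f(1,1,m) ≤ 2 + m.) -/

import Mathlib

/-!
Use open semicircles: they are open and contain no pair of antipodal points. Take `m` copies
of the upper semicircle together with the semicircles centred in the directions `(1, -1)` and
`(-1, -1)`. The upper half is then covered `m` times, and since `0` lies in the interior of the
convex hull of the three poles `(0, 1)`, `(1, -1)`, `(-1, -1)`, every point of the circle lies
in one of the three distinct semicircles.
-/

noncomputable section

open scoped RealInnerProductSpace

/-- The unit sphere `S^d = { x ∈ ℝ^{d+1} : ‖x‖ = 1 }`. -/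
def sphereSet (d : ℕ) : Set (EuclideanSpace ℝ (Fin (d + 1))) :=
  Metric.sphere 0 1

/-- `A` is open in the subspace topology of `S^d`. -/
def IsOpenInSphere (d : ℕ) (A : Set (EuclideanSpace ℝ (Fin (d + 1)))) : Prop :=
  ∃ U : Set (EuclideanSpace ℝ (Fin (d + 1))), IsOpen U ∧ A = U ∩ sphereSet d

/-- The number of indices `i` with `x ∈ F i` (how many times `x` is covered). -/
def covCount {d k : ℕ} (F : Fin k → Set (EuclideanSpace ℝ (Fin (d + 1))))
    (x : EuclideanSpace ℝ (Fin (d + 1))) : ℕ :=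
  Nat.card {i : Fin k // x ∈ F i}

/-- The family is antipodal: no set contains a pair of antipodal points. -/
def IsAntipodalFamily {d k : ℕ} (F : Fin k → Set (EuclideanSpace ℝ (Fin (d + 1)))) : Prop :=
  ∀ i : Fin k, ∀ x ∈ F i, -x ∉ F i

/-- `F` is an `n`-fold cover of `S^d` by open subsets of the sphere:
each set is a subset of the sphere, open in the subspace topology, and every
point of the sphere is covered at least `n` times. -/
def IsNFoldCover {d k : ℕ} (n : ℕ) (F : Fin k → Set (EuclideanSpace ℝ (Fin (d + 1)))) : Prop :=
  (∀ i, F i ⊆ sphereSet d) ∧ (∀ i, IsOpenInSphere d (F i)) ∧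
    (∀ x ∈ sphereSet d, n ≤ covCount F x)

/-- The open northern hemisphere of `S^d`. -/
def openNorth (d : ℕ) : Set (EuclideanSpace ℝ (Fin (d + 1))) :=
  {x ∈ sphereSet d | 0 < x (Fin.last d)}

/-- The closed northern hemisphere of `S^d`. -/
def closedNorth (d : ℕ) : Set (EuclideanSpace ℝ (Fin (d + 1))) :=
  {x ∈ sphereSet d | 0 ≤ x (Fin.last d)}

/-- `F` is an `(n,m)`-fold cover of `S^d`: an `n`-fold cover in which every point
of the open northern hemisphere is covered at least `m` times. -/
def IsNMFoldCover {d k : ℕ} (n m : ℕ)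
    (F : Fin k → Set (EuclideanSpace ℝ (Fin (d + 1)))) : Prop :=
  IsNFoldCover n F ∧ ∀ x ∈ openNorth d, m ≤ covCount F x

/-- `F` is an `(n,m)`-closed-hemisphere-fold cover of `S^d`: an `n`-fold cover in
which every point of the closed northern hemisphere is covered at least `m` times. -/
def IsNMBarFoldCover {d k : ℕ} (n m : ℕ)
    (F : Fin k → Set (EuclideanSpace ℝ (Fin (d + 1)))) : Prop :=
  IsNFoldCover n F ∧ ∀ x ∈ closedNorth d, m ≤ covCount F x

def openHemisphere (d : ℕ) (v : EuclideanSpace ℝ (Fin (d + 1))) :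
    Set (EuclideanSpace ℝ (Fin (d + 1))) :=
  {x | 0 < ⟪v, x⟫} ∩ sphereSet d

theorem isOpenInSphere_openHemisphere (d : ℕ) (v : EuclideanSpace ℝ (Fin (d + 1))) :
    IsOpenInSphere d (openHemisphere d v) :=
  ⟨_, isOpen_lt continuous_const (continuous_const.inner continuous_id), rfl⟩

theorem isAntipodalFamily_openHemisphere {d k : ℕ} (v : Fin k → EuclideanSpace ℝ (Fin (d + 1))) :
    IsAntipodalFamily fun i => openHemisphere d (v i) := by
  intro i x hx hnx
  have hpos : 0 < ⟪v i, x⟫ := hx.1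
  have hneg : 0 < ⟪v i, -x⟫ := hnx.1
  linarith [inner_neg_right (𝕜 := ℝ) (v i) x]

theorem openHemisphere_single_last (d : ℕ) :
    openHemisphere d (EuclideanSpace.single (Fin.last d) 1) = openNorth d := by
  ext x
  simp [openHemisphere, openNorth, EuclideanSpace.inner_single_left, and_comm]

theorem card_le_covCount {d k : ℕ} {F : Fin k → Set (EuclideanSpace ℝ (Fin (d + 1)))}
    {x : EuclideanSpace ℝ (Fin (d + 1))} (s : Finset (Fin k)) (hs : ∀ i ∈ s, x ∈ F i) :
    s.card ≤ covCount F x := by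
  classical
  rw [covCount, Nat.card_eq_fintype_card, Fintype.card_subtype]
  exact Finset.card_le_card fun i hi => Finset.mem_filter.mpr ⟨Finset.mem_univ i, hs i hi⟩

theorem inner_toLp_pair (a b : ℝ) (x : EuclideanSpace ℝ (Fin (1 + 1))) :
    ⟪(!₂[a, b] : EuclideanSpace ℝ (Fin (1 + 1))), x⟫ = a * x 0 + b * x 1 := by
  simp [PiLp.inner_apply, Fin.sum_univ_two, mul_comm]

theorem sphere_subset_union_openHemisphere :
    sphereSet 1 ⊆ openHemisphere 1 (EuclideanSpace.single (Fin.last 1) 1) ∪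
      openHemisphere 1 !₂[1, -1] ∪ openHemisphere 1 !₂[-1, -1] := by
  intro x hx
  have hx0 : x 0 ≠ 0 ∨ x 1 ≠ 0 := by
    contrapose! hx
    have : x = 0 := by ext j; fin_cases j <;> simp [hx]
    simp [this, sphereSet]
  by_contra! h
  simp only [openHemisphere, Set.mem_union, Set.mem_inter_iff, Set.mem_ofPred_eq, hx, and_true,
    not_or, not_lt, EuclideanSpace.inner_single_left, map_one, one_mul, Fin.reduceLast] at h
  obtain ⟨⟨h1, h2⟩, h3⟩ := h
  rw [inner_toLp_pair] at h2 h3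
  rcases hx0 with h | h <;> apply h <;> linarith

def circlePoles (m : ℕ) : Fin (m + 2) → EuclideanSpace ℝ (Fin (1 + 1)) :=
  Fin.append (fun _ : Fin m => EuclideanSpace.single (Fin.last 1) 1) ![!₂[1, -1], !₂[-1, -1]]

/-- Upper bound of Proposition 5: `f(1,1,m) ≤ 2 + m`. There exists an antipodal
`(1,m)`-fold cover of the circle `S^1` with `m + 2` open sets. -/
theorem f_circle_upper_bound (m : ℕ) (hm : 1 < m) :
    ∃ F : Fin (m + 2) → Set (EuclideanSpace ℝ (Fin (1 + 1))),
      IsNMFoldCover 1 m F ∧ IsAntipodalFamily F := by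
  refine ⟨fun i => openHemisphere 1 (circlePoles m i),
    ⟨⟨fun _ => Set.inter_subset_right, fun _ => isOpenInSphere_openHemisphere _ _, ?_⟩, ?_⟩,
    isAntipodalFamily_openHemisphere _⟩
  · intro x hx
    obtain (hx | hx) | hx := sphere_subset_union_openHemisphere hx
    · exact card_le_covCount {Fin.castAdd 2 ⟨0, by omega⟩}
        (by simpa only [Finset.mem_singleton, forall_eq, circlePoles, Fin.append_left] using hx)
    · exact card_le_covCount {Fin.natAdd m 0} (by simpa [circlePoles] using hx)
    · exact card_le_covCount {Fin.natAdd m 1} (by simpa [circlePoles] using hx)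
  · intro x hx
    rw [← openHemisphere_single_last] at hx
    simpa using card_le_covCount (Finset.univ.map (Fin.castAddEmb 2))
      (Finset.forall_mem_map.2 fun i _ => by simpa [circlePoles, Fin.append_left] using hx)
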